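/- If ≺_m and ≺_s are almost compatible, then for every input f = (f_1,…,f_d) ∈ P^d the set of TRP pairs has only finitely many similarity classes. -/

import Mathlib

namespace TRB

open MvPolynomial
open scoped Classical

/-- Monomials in the variables `x₁, …, xₙ`, identified with their exponent vectors;
a monomial `m₁` divides `m₂` iff the exponent vector of `m₁` is componentwise `≤`. -/
abbrev Mon (n : ℕ) := Fin n →₀ ℕ

/-- Module monomials (signatures) `x^α E_i` of the free module `P^d`. -/
abbrev Sig (n d : ℕ) := Mon n × Fin d

/-- The action of a monomial on a module monomial: `m • (x^α E_i) = (m x^α) E_i`. -/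
noncomputable def Sig.smul {n d : ℕ} (m : Mon n) (s : Sig n d) : Sig n d := (m + s.1, s.2)

/-- An admissible monomial order on the monomials of `P = K[x₁,…,xₙ]`:
a (strict) linear order such that `1 ⪯ m` for every monomial `m`, and
multiplication by a monomial is strictly monotone. -/
structure MonOrder (n : ℕ) where
  lt : Mon n → Mon n → Prop
  irrefl : ∀ a, ¬ lt a a
  trans : ∀ a b c, lt a b → lt b c → lt a c
  total : ∀ a b, lt a b ∨ a = b ∨ lt b a
  zero_lt : ∀ a, a ≠ 0 → lt 0 a
  mul_lt_mul : ∀ (m a b : Mon n), lt a b → lt (m + a) (m + b)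

/-- An admissible signature order on module monomials:
a (strict) linear order with `s ⪯ m • s` for every monomial `m`, and such that
multiplication by a monomial is strictly monotone. -/
structure SigOrder (n d : ℕ) where
  lt : Sig n d → Sig n d → Prop
  irrefl : ∀ s, ¬ lt s s
  trans : ∀ s t r, lt s t → lt t r → lt s r
  total : ∀ s t, lt s t ∨ s = t ∨ lt t s
  le_smul : ∀ (m : Mon n) (s : Sig n d), s = Sig.smul m s ∨ lt s (Sig.smul m s)
  smul_lt_smul : ∀ (m : Mon n) (s t : Sig n d), lt s t → lt (Sig.smul m s) (Sig.smul m t)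

/-- Non-strict version of a monomial order. -/
def MonOrder.le {n : ℕ} (mo : MonOrder n) (a b : Mon n) : Prop := mo.lt a b ∨ a = b

/-- Non-strict version of a signature order. -/
def SigOrder.le {n d : ℕ} (so : SigOrder n d) (s t : Sig n d) : Prop := so.lt s t ∨ s = t

/-- The `≺_m`-leading monomial of a polynomial (junk value `0` on the zero polynomial). -/
noncomputable def MonOrder.lm {n : ℕ} {K : Type*} [CommSemiring K] (mo : MonOrder n)
    (v : MvPolynomial (Fin n) K) : Mon n :=
  if h : ∃ m ∈ v.support, ∀ m' ∈ v.support, m' ≠ m → mo.lt m' m then h.choose else 0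

/-- The signature of a module element `u ∈ P^d`: the `≺_s`-largest module monomial
`x^α E_i` whose coefficient in `u` is nonzero (junk value on `u = 0`). -/
noncomputable def SigOrder.sig {n d : ℕ} [NeZero d] {K : Type*} [CommSemiring K]
    (so : SigOrder n d) (u : Fin d → MvPolynomial (Fin n) K) : Sig n d :=
  if h : ∃ s : Sig n d, (u s.2).coeff s.1 ≠ 0 ∧
      ∀ t : Sig n d, (u t.2).coeff t.1 ≠ 0 → t ≠ s → so.lt t s
  then h.choose else (0, ⟨0, Nat.pos_of_ne_zero (NeZero.ne d)⟩)

/-- The ambient type of candidate pairs `(u, v) ∈ P^d × P`. -/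
abbrev PairT (K : Type*) [CommSemiring K] (n d : ℕ) :=
  (Fin d → MvPolynomial (Fin n) K) × MvPolynomial (Fin n) K

variable {K : Type*} [Field K] {n d : ℕ}

/-- `(u, v)` is a pair (w.r.t. the input `f`) if `u ⬝ f = Σ_i u_i f_i = v`. -/
def IsPair (f : Fin d → MvPolynomial (Fin n) K) (p : PairT K n d) : Prop :=
  ∑ i, p.1 i * f i = p.2

/-- Leading monomial of a pair: `lm p = lm v`. -/
noncomputable def lmP (mo : MonOrder n) (p : PairT K n d) : Mon n := mo.lm p.2

/-- Signature of a pair: `sig p = sig u`. -/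
noncomputable def sigP [NeZero d] (so : SigOrder n d) (p : PairT K n d) : Sig n d :=
  so.sig p.1

/-- The pair order: `p ≺_p q` iff `lm(p)·sig(q) ≺_s lm(q)·sig(p)`. -/
def PairLt [NeZero d] (mo : MonOrder n) (so : SigOrder n d) (p q : PairT K n d) : Prop :=
  so.lt (Sig.smul (lmP mo p) (sigP so q)) (Sig.smul (lmP mo q) (sigP so p))

/-- Pairs are similar if `lm(p)·sig(q) = lm(q)·sig(p)`. -/
def Similar [NeZero d] (mo : MonOrder n) (so : SigOrder n d) (p q : PairT K n d) : Prop :=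
  Sig.smul (lmP mo p) (sigP so q) = Sig.smul (lmP mo q) (sigP so p)

/-- `p ⪯_p q`. -/
def PairLE [NeZero d] (mo : MonOrder n) (so : SigOrder n d) (p q : PairT K n d) : Prop :=
  PairLt mo so p q ∨ Similar mo so p q

/-- Pairs are equivalent if they have the same signature and the same leading monomial. -/
def Equivalent [NeZero d] (mo : MonOrder n) (so : SigOrder n d) (p q : PairT K n d) : Prop :=
  sigP so p = sigP so q ∧ lmP mo p = lmP mo q

/-- `p` is top reducible by `q`: both non-syzygy, `p ≺_p q` and `lm(q) ∣ lm(p)`. -/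
def TopRed [NeZero d] (mo : MonOrder n) (so : SigOrder n d) (p q : PairT K n d) : Prop :=
  p.2 ≠ 0 ∧ q.2 ≠ 0 ∧ PairLt mo so p q ∧ lmP mo q ≤ lmP mo p

/-- A TRP pair: a non-syzygy pair that is top reducible by no pair. -/
def IsTRP [NeZero d] (f : Fin d → MvPolynomial (Fin n) K) (mo : MonOrder n)
    (so : SigOrder n d) (p : PairT K n d) : Prop :=
  IsPair f p ∧ p.2 ≠ 0 ∧ ∀ q : PairT K n d, IsPair f q → ¬ TopRed mo so p q

/-- Divisibility of signatures: `x^α E_i ∣ x^β E_j` iff `i = j` and `x^α ∣ x^β`. -/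
def SigDvd {n d : ℕ} (s t : Sig n d) : Prop := s.2 = t.2 ∧ s.1 ≤ t.1

/-- A TRB pair: a TRP pair `p` such that no TRP pair similar to `p` has signature
properly dividing `sig p`. -/
def IsTRB [NeZero d] (f : Fin d → MvPolynomial (Fin n) K) (mo : MonOrder n)
    (so : SigOrder n d) (p : PairT K n d) : Prop :=
  IsTRP f mo so p ∧ ∀ q : PairT K n d, IsTRP f mo so q → Similar mo so p q →
    SigDvd (sigP so q) (sigP so p) → sigP so q = sigP so p

/-- A signature is syzygy if it is the signature of a syzygy pair `(u, 0)`, `u ≠ 0`. -/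
def IsSyzygySig [NeZero d] (f : Fin d → MvPolynomial (Fin n) K) (so : SigOrder n d)
    (s : Sig n d) : Prop :=
  ∃ u : Fin d → MvPolynomial (Fin n) K, u ≠ 0 ∧ IsPair f (u, 0) ∧ so.sig u = s

/-- The sub-order `≺_{s,i}` on monomials: `x^α ≺_{s,i} x^β` iff `x^α E_i ≺_s x^β E_i`. -/
def SubOrder {n d : ℕ} (so : SigOrder n d) (i : Fin d) (a b : Mon n) : Prop :=
  so.lt (a, i) (b, i)

/-- The sub-order `≺_{s,i}` coincides with `≺_m`. -/
def EqOrders {n d : ℕ} (so : SigOrder n d) (mo : MonOrder n) (i : Fin d) : Prop :=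
  ∀ a b : Mon n, SubOrder so i a b ↔ mo.lt a b

/-- `≺_m` and `≺_s` are almost compatible: either every sub-order `≺_{s,i}` coincides
with `≺_m`, or there is exactly one index `k` with `≺_{s,k} ≠ ≺_m`, and this `k`
satisfies `x^α E_k ≺_s E_i` for every monomial `x^α` and every index `i ≠ k`. -/
def AlmostCompatible {n d : ℕ} (mo : MonOrder n) (so : SigOrder n d) : Prop :=
  (∀ i, EqOrders so mo i) ∨
  (∃ k, ¬ EqOrders so mo k ∧ (∀ i, i ≠ k → EqOrders so mo i) ∧
    ∀ (a : Mon n) (i : Fin d), i ≠ k → so.lt (a, k) ((0 : Mon n), i))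

/-- `≺_m` and `≺_s` are compatible: `s₁ ⪯_s s₂` and `m₁ ⪯_m m₂` imply
`m₁·s₁ ⪯_s m₂·s₂`, with equality only when `s₁ = s₂` and `m₁ = m₂`. -/
def Compatible {n d : ℕ} (mo : MonOrder n) (so : SigOrder n d) : Prop :=
  ∀ (s₁ s₂ : Sig n d) (m₁ m₂ : Mon n), so.le s₁ s₂ → mo.le m₁ m₂ →
    so.le (Sig.smul m₁ s₁) (Sig.smul m₂ s₂) ∧
    (Sig.smul m₁ s₁ = Sig.smul m₂ s₂ → s₁ = s₂ ∧ m₁ = m₂)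

/-- The multiplied pair `m·p = (X^m · u, X^m · v)`. -/
noncomputable def mulPair (m : Mon n) (p : PairT K n d) : PairT K n d :=
  (fun i => monomial m (1 : K) * p.1 i, monomial m (1 : K) * p.2)

/-- `[m, p]` is the J-pair of the non-similar non-syzygy pairs `p₁, p₂`:
`p` is the `≺_p`-smaller of the two and `m·lm(p) = lcm(lm p₁, lm p₂)`. -/
def IsJPair [NeZero d] (mo : MonOrder n) (so : SigOrder n d) (p₁ p₂ : PairT K n d)
    (m : Mon n) (p : PairT K n d) : Prop :=
  p₁.2 ≠ 0 ∧ p₂.2 ≠ 0 ∧ ¬ Similar mo so p₁ p₂ ∧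
  ((PairLt mo so p₁ p₂ ∧ p = p₁) ∨ (PairLt mo so p₂ p₁ ∧ p = p₂)) ∧
  m + lmP mo p = lmP mo p₁ ⊔ lmP mo p₂

/-- `G` is a Gröbner basis of the ideal `⟨f₁,…,f_d⟩` w.r.t. `≺_m`: `G` consists of
elements of the ideal, and for every nonzero `v` in the ideal there is a nonzero
`g ∈ G` with `lm g ∣ lm v`. -/
def IsGroebnerBasis (mo : MonOrder n) (f : Fin d → MvPolynomial (Fin n) K)
    (G : Set (MvPolynomial (Fin n) K)) : Prop :=
  (∀ g ∈ G, g ∈ Ideal.span (Set.range f)) ∧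
  ∀ v ∈ Ideal.span (Set.range f), v ≠ 0 →
    ∃ g ∈ G, g ≠ 0 ∧ mo.lm g ≤ mo.lm v

/-!
Attach to a pair `p` the data `(lm p, sig p)`. Let `p, q` be TRP pairs whose signatures have the
same index `i`, with `sig p ∣ sig q` and `lm p ∣ lm q`. If `≺_{s,i}` agrees with `≺_m` and `p ≁ q`,
a monomial multiple of `p` either has the leading monomial of `q` and a smaller signature, or the
signature of `q` and a smaller leading monomial; in the second case cancelling the leading
signature terms gives a pair with the leading monomial of `q` and a smaller signature. Either way
`q` is top reducible. At the exceptional index `k` of almost compatible orders, every TRP pair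
`(u, v)` has `u = u_k E_k` and `sig = (lm u_k) E_k`, so `lm - sig = lm f_k` and all of them are
similar. By Dickson's lemma the data of the TRP pairs contain no infinite antichain, which leaves
finitely many similarity classes.
-/

section StrictTotalOrder

variable {α : Type*} {r : α → α → Prop} [IsStrictTotalOrder α r]

theorem _root_.Set.Finite.exists_rel_max {s : Set α} (hs : s.Finite) (hne : s.Nonempty) :
    ∃ a ∈ s, ∀ x ∈ s, x ≠ a → r x a := by
  classical
  let := linearOrderOfSTO r
  obtain ⟨a, ha, hmax⟩ := Set.exists_max_image s id hs hne
  exact ⟨a, ha, fun x hx hxa => (hmax x hx).resolve_left hxa⟩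

theorem _root_.eq_of_rel_max {s : Set α} {a b : α} (ha : a ∈ s) (hamax : ∀ x ∈ s, x ≠ a → r x a)
    (hb : b ∈ s) (hbmax : ∀ x ∈ s, x ≠ b → r x b) : a = b :=
  by_contra fun h => asymm (hbmax a ha h) (hamax b hb (Ne.symm h))

end StrictTotalOrder

theorem _root_.WellQuasiOrdered.finite_image {α β γ : Type*} {r : β → β → Prop}
    (hr : WellQuasiOrdered r) (φ : α → β) {κ : α → γ} {S : Set α}
    (h : ∀ x ∈ S, ∀ y ∈ S, r (φ x) (φ y) → κ x = κ y) : (κ '' S).Finite := by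
  by_contra hinf
  set e := Set.Infinite.natEmbedding _ hinf
  choose x hxS hx using fun k => (e k).2
  obtain ⟨k, l, hkl, hr⟩ := hr (φ ∘ x)
  refine hkl.ne (e.injective (Subtype.ext ?_))
  rw [← hx k, ← hx l, h _ (hxS k) _ (hxS l) hr]

instance MonOrder.isStrictTotalOrder (mo : MonOrder n) :
    IsStrictTotalOrder (Mon n) mo.lt where
  irrefl := mo.irrefl
  trans := mo.trans
  trichotomous a b h1 h2 := ((mo.total a b).resolve_left h1).resolve_right h2

instance SigOrder.isStrictTotalOrder (so : SigOrder n d) :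
    IsStrictTotalOrder (Sig n d) so.lt where
  irrefl := so.irrefl
  trans := so.trans
  trichotomous a b h1 h2 := ((so.total a b).resolve_left h1).resolve_right h2

namespace MonOrder

variable (mo : MonOrder n) {a b c e m : Mon n}

theorem lt_of_lt_of_le (hab : mo.lt a b) (hbc : mo.le b c) : mo.lt a c := by
  rcases hbc with hbc | rfl
  exacts [mo.trans _ _ _ hab hbc, hab]

theorem lt_of_le_of_lt (hab : mo.le a b) (hbc : mo.lt b c) : mo.lt a c := by
  rcases hab with hab | rfl
  exacts [mo.trans _ _ _ hab hbc, hbc]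

theorem lt_of_add_lt_add_left (h : mo.lt (m + a) (m + b)) : mo.lt a b := by
  rcases mo.total a b with hab | rfl | hba
  · exact hab
  · exact absurd h (mo.irrefl _)
  · exact absurd (mo.mul_lt_mul m _ _ hba) (asymm h)

theorem lt_of_add_lt_add_right (h : mo.lt (a + m) (b + m)) : mo.lt a b :=
  mo.lt_of_add_lt_add_left (m := m) (by rwa [add_comm m a, add_comm m b])

theorem add_lt_add_of_lt_of_le (hab : mo.lt a b) (hce : mo.le c e) : mo.lt (a + c) (b + e) := by
  refine mo.lt_of_lt_of_le (b := b + c) ?_ ?_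
  · simpa only [add_comm _ c] using mo.mul_lt_mul c _ _ hab
  rcases hce with hce | rfl
  exacts [Or.inl (mo.mul_lt_mul b _ _ hce), Or.inr rfl]

section CommSemiring

variable {R : Type*} [CommSemiring R] {v w : MvPolynomial (Fin n) R}

theorem lm_eq_of (hm : v.coeff m ≠ 0)
    (hmax : ∀ m', v.coeff m' ≠ 0 → m' ≠ m → mo.lt m' m) : mo.lm v = m := by
  have hex : ∃ m ∈ v.support, ∀ m' ∈ v.support, m' ≠ m → mo.lt m' m :=
    ⟨m, mem_support_iff.2 hm, fun m' h => hmax m' (mem_support_iff.1 h)⟩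
  rw [lm, dif_pos hex]
  exact eq_of_rel_max (s := ↑v.support) hex.choose_spec.1 hex.choose_spec.2
    (mem_support_iff.2 hm) fun m' h => hmax m' (mem_support_iff.1 h)

theorem coeff_lm_ne_zero_and_lt_lm (hv : v ≠ 0) : v.coeff (mo.lm v) ≠ 0 ∧
    ∀ m, v.coeff m ≠ 0 → m ≠ mo.lm v → mo.lt m (mo.lm v) := by
  obtain ⟨m, hm, hmax⟩ := v.support.finite_toSet.exists_rel_max (r := mo.lt)
    (Finset.coe_nonempty.2 (support_nonempty.2 hv))
  have hmax' : ∀ m', v.coeff m' ≠ 0 → m' ≠ m → mo.lt m' m :=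
    fun m' h => hmax m' (mem_support_iff.2 h)
  rw [mo.lm_eq_of (mem_support_iff.1 hm) hmax']
  exact ⟨mem_support_iff.1 hm, hmax'⟩

theorem coeff_lm_ne_zero (hv : v ≠ 0) : v.coeff (mo.lm v) ≠ 0 :=
  (mo.coeff_lm_ne_zero_and_lt_lm hv).1

theorem lt_lm (hm : v.coeff m ≠ 0) (hne : m ≠ mo.lm v) : mo.lt m (mo.lm v) :=
  (mo.coeff_lm_ne_zero_and_lt_lm fun hv => hm (by simp [hv])).2 m hm hne

theorem le_lm (hm : v.coeff m ≠ 0) : mo.le m (mo.lm v) :=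
  (eq_or_ne m (mo.lm v)).symm.imp (mo.lt_lm hm) id

theorem coeff_eq_zero_of_lm_lt (h : mo.lt (mo.lm v) m) : v.coeff m = 0 :=
  by_contra fun hm => mo.irrefl _ (mo.lt_of_lt_of_le h (mo.le_lm hm))

theorem lm_monomial {r : R} (hr : r ≠ 0) : mo.lm (monomial m r) = m :=
  mo.lm_eq_of (by rwa [coeff_monomial, if_pos rfl]) fun m' hm' hne =>
    absurd (by rw [coeff_monomial, if_neg (Ne.symm hne)]) hm'

theorem add_lt_lm_add_lm {x y : Mon n} (hx : v.coeff x ≠ 0) (hy : w.coeff y ≠ 0)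
    (hxy : (x, y) ≠ (mo.lm v, mo.lm w)) : mo.lt (x + y) (mo.lm v + mo.lm w) := by
  rcases mo.le_lm hx with hx' | rfl
  · exact mo.add_lt_add_of_lt_of_le hx' (mo.le_lm hy)
  · rcases mo.le_lm hy with hy' | rfl
    · exact mo.mul_lt_mul _ _ _ hy'
    · exact absurd rfl hxy

theorem lm_mul [NoZeroDivisors R] (hv : v ≠ 0) (hw : w ≠ 0) :
    mo.lm (v * w) = mo.lm v + mo.lm w := by
  apply mo.lm_eq_of
  · rw [coeff_mul, Finset.sum_eq_single (mo.lm v, mo.lm w)]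
    · exact mul_ne_zero (mo.coeff_lm_ne_zero hv) (mo.coeff_lm_ne_zero hw)
    · rintro ⟨x, y⟩ hxy hne
      rw [Finset.HasAntidiagonal.mem_antidiagonal] at hxy
      by_contra h
      have := mo.add_lt_lm_add_lm (left_ne_zero_of_mul h) (right_ne_zero_of_mul h) hne
      exact mo.irrefl _ (hxy ▸ this)
    · simp
  · intro m hm hne
    obtain ⟨x, hx, y, hy, rfl⟩ := Finset.mem_add.1 (support_mul v w (mem_support_iff.2 hm))
    exact mo.add_lt_lm_add_lm (mem_support_iff.1 hx) (mem_support_iff.1 hy)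
      fun h => hne (by simp_all)

end CommSemiring

section CommRing

variable {R : Type*} [CommRing R] {v w : MvPolynomial (Fin n) R}

theorem coeff_lm_smul_sub_smul (hw : mo.lt (mo.lm w) (mo.lm v)) (a b : R) :
    (a • v - b • w).coeff (mo.lm v) = a * v.coeff (mo.lm v) := by
  rw [coeff_sub, coeff_smul, coeff_smul, smul_eq_mul, smul_eq_mul, mo.coeff_eq_zero_of_lm_lt hw,
    mul_zero, sub_zero]

theorem lm_smul_sub_smul [NoZeroDivisors R] (hv : v ≠ 0) (hw : mo.lt (mo.lm w) (mo.lm v))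
    {a : R} (ha : a ≠ 0) (b : R) : mo.lm (a • v - b • w) = mo.lm v := by
  refine mo.lm_eq_of ?_ fun m hm hne => ?_
  · rw [mo.coeff_lm_smul_sub_smul hw]
    exact mul_ne_zero ha (mo.coeff_lm_ne_zero hv)
  · rw [coeff_sub, coeff_smul, coeff_smul, smul_eq_mul, smul_eq_mul] at hm
    by_cases hvm : v.coeff m = 0
    · rw [hvm, mul_zero, zero_sub, neg_ne_zero] at hm
      exact mo.lt_of_le_of_lt (mo.le_lm (right_ne_zero_of_mul hm)) hw
    · exact mo.lt_lm hvm hne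

end CommRing

end MonOrder

namespace SigOrder

variable (so : SigOrder n d) {s t : Sig n d}

theorem lt_of_lt_of_le {r : Sig n d} (hst : so.lt s t) (htr : so.le t r) : so.lt s r := by
  rcases htr with htr | rfl
  exacts [so.trans _ _ _ hst htr, hst]

theorem le_smul_self (m : Mon n) (s : Sig n d) : so.le s (Sig.smul m s) :=
  (so.le_smul m s).symm

variable [NeZero d]

section CommSemiring

variable {R : Type*} [CommSemiring R] {u : Fin d → MvPolynomial (Fin n) R}

theorem sig_eq_of (hs : (u s.2).coeff s.1 ≠ 0)
    (hmax : ∀ t : Sig n d, (u t.2).coeff t.1 ≠ 0 → t ≠ s → so.lt t s) : so.sig u = s := by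
  have hex : ∃ s : Sig n d, (u s.2).coeff s.1 ≠ 0 ∧
      ∀ t : Sig n d, (u t.2).coeff t.1 ≠ 0 → t ≠ s → so.lt t s := ⟨s, hs, hmax⟩
  rw [sig, dif_pos hex]
  exact eq_of_rel_max (s := {t : Sig n d | (u t.2).coeff t.1 ≠ 0}) hex.choose_spec.1
    hex.choose_spec.2 hs hmax

theorem coeff_sig_ne_zero_and_lt_sig (hu : u ≠ 0) : (u (so.sig u).2).coeff (so.sig u).1 ≠ 0 ∧
    ∀ t : Sig n d, (u t.2).coeff t.1 ≠ 0 → t ≠ so.sig u → so.lt t (so.sig u) := by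
  have hfin : {t : Sig n d | (u t.2).coeff t.1 ≠ 0}.Finite :=
    (Set.finite_iUnion fun i => (u i).support.finite_toSet.image (·, i)).subset
      fun t ht => Set.mem_iUnion.2 ⟨t.2, t.1, mem_support_iff.2 ht, rfl⟩
  obtain ⟨i, hi⟩ := Function.ne_iff.1 hu
  obtain ⟨m, hm⟩ := support_nonempty.2 hi
  obtain ⟨s, hs, hmax⟩ := hfin.exists_rel_max (r := so.lt) ⟨(m, i), mem_support_iff.1 hm⟩
  rw [so.sig_eq_of hs hmax]
  exact ⟨hs, hmax⟩

theorem coeff_sig_ne_zero (hu : u ≠ 0) : (u (so.sig u).2).coeff (so.sig u).1 ≠ 0 :=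
  (so.coeff_sig_ne_zero_and_lt_sig hu).1

theorem lt_sig (ht : (u t.2).coeff t.1 ≠ 0) (hne : t ≠ so.sig u) : so.lt t (so.sig u) :=
  (so.coeff_sig_ne_zero_and_lt_sig fun hu => ht (by simp [hu])).2 t ht hne

theorem le_sig (ht : (u t.2).coeff t.1 ≠ 0) : so.le t (so.sig u) :=
  (eq_or_ne t (so.sig u)).symm.imp (so.lt_sig ht) id

theorem sig_monomial_smul (hu : u ≠ 0) (e : Mon n) :
    so.sig (monomial e (1 : R) • u) = Sig.smul e (so.sig u) := by
  refine so.sig_eq_of ?_ fun ⟨m, j⟩ hm hne => ?_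
  · simpa [Sig.smul, coeff_monomial_mul] using so.coeff_sig_ne_zero hu
  · simp only [Pi.smul_apply, smul_eq_mul, coeff_monomial_mul'] at hm
    split_ifs at hm with hle
    · have hsmul : Sig.smul e (m - e, j) = (m, j) := by
        simp [Sig.smul, add_tsub_cancel_of_le hle]
      rw [one_mul] at hm
      rw [← hsmul] at hne ⊢
      exact so.smul_lt_smul e _ _ (so.lt_sig hm fun h => hne (by rw [h]))
    · exact absurd rfl hm

theorem sig_single_one [Nontrivial R] (k : Fin d) :
    so.sig (Pi.single k (1 : MvPolynomial (Fin n) R)) = (0, k) := by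
  refine so.sig_eq_of (by simp) fun ⟨m, j⟩ hm hne => absurd ?_ hm
  by_cases hj : j = k
  · subst hj
    have hm0 : m ≠ 0 := fun h => hne (by rw [h])
    simp [coeff_one, Ne.symm hm0]
  · simp [hj]

end CommSemiring

section CommRing

variable {R : Type*} [CommRing R] {u u' : Fin d → MvPolynomial (Fin n) R} {σ : Sig n d}

theorem sig_smul_sub_smul_lt (hu : so.sig u = σ) (hu' : so.sig u' = σ)
    (hw : (u' σ.2).coeff σ.1 • u - (u σ.2).coeff σ.1 • u' ≠ 0) :
    so.lt (so.sig ((u' σ.2).coeff σ.1 • u - (u σ.2).coeff σ.1 • u')) σ := by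
  set w := (u' σ.2).coeff σ.1 • u - (u σ.2).coeff σ.1 • u'
  have hcoeff (t : Sig n d) : (w t.2).coeff t.1 =
      (u' σ.2).coeff σ.1 * (u t.2).coeff t.1 - (u σ.2).coeff σ.1 * (u' t.2).coeff t.1 := by
    simp [w]
  have hw0 := so.coeff_sig_ne_zero hw
  rw [hcoeff] at hw0
  have hle : so.le (so.sig w) σ := by
    by_cases h : (u (so.sig w).2).coeff (so.sig w).1 = 0
    · rw [h, mul_zero, zero_sub, neg_ne_zero] at hw0
      exact hu' ▸ so.le_sig (right_ne_zero_of_mul hw0)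
    · exact hu ▸ so.le_sig h
  refine hle.resolve_right fun heq => hw0 ?_
  rw [heq, mul_comm, sub_self]

end CommRing

end SigOrder

section Pairs

variable {f : Fin d → MvPolynomial (Fin n) K} {p q r : PairT K n d}

theorem IsPair.fst_ne_zero (hp : IsPair f p) (hp2 : p.2 ≠ 0) : p.1 ≠ 0 := by
  rintro h
  rw [IsPair, h] at hp
  simp [← hp] at hp2

theorem IsPair.smul {S : Type*} [DistribSMul S (MvPolynomial (Fin n) K)]
    [IsScalarTower S (MvPolynomial (Fin n) K) (MvPolynomial (Fin n) K)]
    (hp : IsPair f p) (c : S) : IsPair f (c • p) := by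
  simp only [IsPair, Prod.smul_fst, Prod.smul_snd, Pi.smul_apply, smul_mul_assoc]
  rw [← Finset.smul_sum, hp]

theorem IsPair.sub (hp : IsPair f p) (hq : IsPair f q) : IsPair f (p - q) := by
  simp only [IsPair, Prod.fst_sub, Prod.snd_sub, Pi.sub_apply, sub_mul, Finset.sum_sub_distrib]
  rw [hp, hq]

theorem isPair_single (f : Fin d → MvPolynomial (Fin n) K) (k : Fin d) :
    IsPair f (Pi.single k 1, f k) := by
  simp [IsPair, Pi.single_apply]

theorem lmP_monomial_smul (mo : MonOrder n) (hp2 : p.2 ≠ 0) (e : Mon n) :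
    lmP mo (monomial e (1 : K) • p) = e + lmP mo p := by
  rw [lmP, Prod.smul_snd, smul_eq_mul, mo.lm_mul (by simp) hp2, mo.lm_monomial one_ne_zero, lmP]

variable [NeZero d] (mo : MonOrder n) (so : SigOrder n d)

theorem sigP_monomial_smul (hp1 : p.1 ≠ 0) (e : Mon n) :
    sigP so (monomial e (1 : K) • p) = Sig.smul e (sigP so p) :=
  so.sig_monomial_smul hp1 e

theorem exists_pair_sigP_lt_of_sigP_eq (hp : IsPair f p) (hp2 : p.2 ≠ 0) (hq : IsPair f q)
    (hq2 : q.2 ≠ 0) (hsig : sigP so p = sigP so q) (hlm : mo.lt (lmP mo p) (lmP mo q)) :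
    ∃ r, IsPair f r ∧ r.2 ≠ 0 ∧ lmP mo r = lmP mo q ∧ so.lt (sigP so r) (sigP so q) := by
  set σ := sigP so q
  have hγ : (p.1 σ.2).coeff σ.1 ≠ 0 := hsig ▸ so.coeff_sig_ne_zero (hp.fst_ne_zero hp2)
  set r := (p.1 σ.2).coeff σ.1 • q - (q.1 σ.2).coeff σ.1 • p
  have hr : IsPair f r := (hq.smul _).sub (hp.smul _)
  have hr2 : r.2 ≠ 0 := fun h => mul_ne_zero hγ (mo.coeff_lm_ne_zero hq2) <| by
    rw [← mo.coeff_lm_smul_sub_smul hlm, ← coeff_zero (lmP mo q), ← h]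
    rfl
  exact ⟨r, hr, hr2, mo.lm_smul_sub_smul hq2 hlm hγ _,
    so.sig_smul_sub_smul_lt rfl hsig (hr.fst_ne_zero hr2)⟩

theorem IsTRP.not_sigP_lt (hq : IsTRP f mo so q) (hr : IsPair f r) (hr2 : r.2 ≠ 0)
    (hlm : lmP mo r = lmP mo q) : ¬ so.lt (sigP so r) (sigP so q) := fun hlt =>
  hq.2.2 r hr ⟨hq.2.1, hr2, by rw [PairLt, hlm]; exact so.smul_lt_smul _ _ _ hlt, hlm.le⟩

theorem IsTRP.not_lmP_lt_of_sigP_eq (hq : IsTRP f mo so q) (hp : IsPair f p) (hp2 : p.2 ≠ 0)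
    (hsig : sigP so p = sigP so q) : ¬ mo.lt (lmP mo p) (lmP mo q) := fun hlt =>
  let ⟨_, hr, hr2, hlm, hlt'⟩ := exists_pair_sigP_lt_of_sigP_eq mo so hp hp2 hq.1 hq.2.1 hsig hlt
  hq.not_sigP_lt mo so hr hr2 hlm hlt'

end Pairs

section Similarity

variable [NeZero d] {mo : MonOrder n} {so : SigOrder n d} {f : Fin d → MvPolynomial (Fin n) K}
  {p q r : PairT K n d}

theorem similar_iff_of_sigP_snd_eq (hidx : (sigP so p).2 = (sigP so q).2) :
    Similar mo so p q ↔ lmP mo p + (sigP so q).1 = lmP mo q + (sigP so p).1 := by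
  simp [Similar, Sig.smul, hidx]

theorem Similar.trans (hpq : Similar mo so p q) (hqr : Similar mo so q r) :
    Similar mo so p r := by
  simp only [Similar, Sig.smul, Prod.mk.injEq] at hpq hqr ⊢
  refine ⟨?_, hqr.2.trans hpq.2⟩
  ext x
  have h1 := DFunLike.congr_fun hpq.1 x
  have h2 := DFunLike.congr_fun hqr.1 x
  simp only [Finsupp.add_apply] at h1 h2 ⊢
  omega

variable (mo so) in
def similarSetoid : Setoid (PairT K n d) where
  r := Similar mo so
  iseqv := ⟨fun _ => rfl, Eq.symm, Similar.trans⟩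

theorem IsTRP.similar_of_sigDvd (hq : IsTRP f mo so q) (hord : EqOrders so mo (sigP so q).2)
    (hp : IsPair f p) (hp2 : p.2 ≠ 0) (hsig : SigDvd (sigP so p) (sigP so q))
    (hlm : lmP mo p ≤ lmP mo q) : Similar mo so p q := by
  obtain ⟨hidx, hdvd⟩ := hsig
  have hp1 := hp.fst_ne_zero hp2
  rw [similar_iff_of_sigP_snd_eq hidx]
  rcases mo.total (lmP mo p + (sigP so q).1) (lmP mo q + (sigP so p).1) with hlt | heq | hgt
  · obtain ⟨e, he⟩ := exists_add_of_le hdvd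
    refine absurd ?_ (hq.not_lmP_lt_of_sigP_eq mo so (hp.smul (monomial e (1 : K)))
      (mul_ne_zero (by simp) hp2) ?_)
    · rw [lmP_monomial_smul mo hp2]
      refine mo.lt_of_add_lt_add_right (m := (sigP so p).1) ?_
      convert hlt using 1
      rw [he]
      abel
    · rw [sigP_monomial_smul so hp1, Sig.smul, add_comm, ← he, hidx]
  · exact heq
  · obtain ⟨c, hc⟩ := exists_add_of_le hlm
    refine absurd ?_ (hq.not_sigP_lt mo so (hp.smul (monomial c (1 : K)))
      (mul_ne_zero (by simp) hp2) ?_)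
    · rw [sigP_monomial_smul so hp1, Sig.smul, hidx]
      refine (hord _ (sigP so q).1).2 (mo.lt_of_add_lt_add_left (m := lmP mo p) ?_)
      convert hgt using 1
      rw [hc]
      abel
    · rw [lmP_monomial_smul mo hp2, hc, add_comm]

end Similarity

section AlmostCompatible

variable [NeZero d] {mo : MonOrder n} {so : SigOrder n d} {f : Fin d → MvPolynomial (Fin n) K}
  {p q : PairT K n d}

theorem IsTRP.lmP_eq_sigP_fst_add_lm {k : Fin d}
    (hbelow : ∀ (a : Mon n) (i : Fin d), i ≠ k → so.lt (a, k) ((0 : Mon n), i))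
    (hq : IsTRP f mo so q) (hk : (sigP so q).2 = k) :
    lmP mo q = (sigP so q).1 + mo.lm (f k) := by
  have hzero (j : Fin d) (hj : j ≠ k) : q.1 j = 0 := by
    ext m
    by_contra hm
    have hlt : so.lt (sigP so q) (m, j) := by
      refine so.lt_of_lt_of_le (hk ▸ hbelow _ j hj) ?_
      simpa [Sig.smul] using so.le_smul_self m ((0 : Mon n), j)
    exact so.irrefl _ (so.lt_of_lt_of_le hlt (so.le_sig hm))
  have hv : q.2 = q.1 k * f k := by
    rw [← hq.1]
    exact Finset.sum_eq_single k (fun j _ hj => by rw [hzero j hj, zero_mul]) (by simp)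
  have hg : q.1 k ≠ 0 := fun h => hq.2.1 (by rw [hv, h, zero_mul])
  have hf : f k ≠ 0 := fun h => hq.2.1 (by rw [hv, h, mul_zero])
  have hlm : lmP mo q = mo.lm (q.1 k) + mo.lm (f k) := by rw [lmP, hv, mo.lm_mul hg hf]
  set r := monomial (mo.lm (q.1 k)) (1 : K) • ((Pi.single k 1, f k) : PairT K n d)
  have hr2 : r.2 ≠ 0 := mul_ne_zero (by simp) hf
  have hsigr : sigP so r = (mo.lm (q.1 k), k) := by
    rw [sigP_monomial_smul so (by simp), sigP, so.sig_single_one, Sig.smul, add_zero]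
  have hle : so.le (mo.lm (q.1 k), k) (sigP so q) := so.le_sig (mo.coeff_lm_ne_zero hg)
  rcases hle with hlt | heq
  · exact absurd (hsigr ▸ hlt) (hq.not_sigP_lt mo so ((isPair_single f k).smul _) hr2
      (by rw [lmP_monomial_smul mo hf, hlm]; rfl))
  · rw [hlm, ← heq]

theorem AlmostCompatible.similar_of_sigDvd (h : AlmostCompatible mo so) (hp : IsTRP f mo so p)
    (hq : IsTRP f mo so q) (hsig : SigDvd (sigP so p) (sigP so q)) (hlm : lmP mo p ≤ lmP mo q) :
    Similar mo so p q := by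
  rcases h with hall | ⟨k, -, hothers, hbelow⟩
  · exact hq.similar_of_sigDvd (hall _) hp.1 hp.2.1 hsig hlm
  by_cases hk : (sigP so q).2 = k
  · rw [similar_iff_of_sigP_snd_eq hsig.1, hp.lmP_eq_sigP_fst_add_lm hbelow (hsig.1.trans hk),
      hq.lmP_eq_sigP_fst_add_lm hbelow hk]
    abel
  · exact hq.similar_of_sigDvd (hothers _ hk) hp.1 hp.2.1 hsig hlm

end AlmostCompatible

theorem wellQuasiOrdered_sigDvd : WellQuasiOrdered (SigDvd : Sig n d → Sig n d → Prop) :=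
  fun g => (wellQuasiOrdered_le.prod (Finite.wellQuasiOrdered (· = ·)) g).imp
    fun _ => Exists.imp fun _ h => ⟨h.1, h.2.2, h.2.1⟩

theorem AlmostCompatible.finite_similarityClasses [NeZero d] {mo : MonOrder n}
    {so : SigOrder n d} (h : AlmostCompatible mo so) (f : Fin d → MvPolynomial (Fin n) K) :
    (Quotient.mk (similarSetoid mo so) '' {p | IsTRP f mo so p}).Finite :=
  WellQuasiOrdered.finite_image (wellQuasiOrdered_le.prod wellQuasiOrdered_sigDvd)
    (fun p => (lmP mo p, sigP so p)) fun _ hp _ hq hpq =>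
      Quotient.sound (h.similar_of_sigDvd hp hq hpq.2 hpq.1)

/-- If `≺_m` and `≺_s` are almost compatible, then for every input
`f = (f₁,…,f_d) ∈ P^d` the set of TRP pairs has only finitely many similarity classes. -/
theorem almostCompatible_finitely_many_TRP_classes {K : Type*} [Field K] {n d : ℕ}
    [NeZero d] (mo : MonOrder n) (so : SigOrder n d)
    (h : AlmostCompatible mo so) (f : Fin d → MvPolynomial (Fin n) K) :
    ∃ T : Finset (PairT K n d), ∀ p : PairT K n d, IsTRP f mo so p →
      ∃ q ∈ T, Similar mo so p q := by
  have hfin := h.finite_similarityClasses f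
  refine ⟨hfin.toFinset.image Quotient.out, fun p hp =>
    ⟨(Quotient.mk (similarSetoid mo so) p).out, ?_, ?_⟩⟩
  · exact Finset.mem_image_of_mem _ (hfin.mem_toFinset.2 ⟨p, hp, rfl⟩)
  · exact Eq.symm (Quotient.mk_out (s := similarSetoid mo so) p)

end TRB
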